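/- arXiv:2605.27991 — 2 statements merged into one kernel-verified Lean document; each statement's English description precedes it below -/
import Mathlib

section
/- Let H be an n×n symmetric positive semidefinite real matrix, y, f0 ∈ ℝ^n, and t ≥ 0. Then the gradient-flow fitted value f0 + (I − exp(−tH))(y − f0) equals f0 + C_t (C_t + I)^{-1} (y − f0), where C_t = exp(tH) − I; that is, the early-stopped predictor coincides with the best linear unbiased predictor under the working random-effects model with random-effect covariance proportional to exp(tH) − I and noise covariance proportional to I. -/
open Matrix NormedSpace

namespace Matrix

variable {m 𝔸 : Type*} [Fintype m] [DecidableEq m]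

theorem sub_one_mul_nonsing_inv [CommRing 𝔸] {A : Matrix m m 𝔸} (h : IsUnit A.det) :
    (A - 1) * A⁻¹ = 1 - A⁻¹ := by
  rw [sub_mul, mul_nonsing_inv A h, one_mul]

theorem exp_sub_one_mul_inv_exp [NormedCommRing 𝔸] [NormedAlgebra ℚ 𝔸] [CompleteSpace 𝔸]
    (A : Matrix m m 𝔸) : (exp A - 1) * (exp A)⁻¹ = 1 - exp (-A) := by
  rw [sub_one_mul_nonsing_inv ((isUnit_iff_isUnit_det _).mp (isUnit_exp A)), exp_neg]

end Matrix

theorem stmt0_general {n : ℕ} (H : Matrix (Fin n) (Fin n) ℝ)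
    (y f0 : Fin n → ℝ) (t : ℝ) :
    let C : Matrix (Fin n) (Fin n) ℝ := NormedSpace.exp (t • H) - 1
    f0 + (1 - NormedSpace.exp (-(t • H))).mulVec (y - f0)
      = f0 + (C * (C + 1)⁻¹).mulVec (y - f0) := by
  intro C
  rw [show C + 1 = exp (t • H) from sub_add_cancel _ _, exp_sub_one_mul_inv_exp]

theorem stmt0 {n : ℕ} (H : Matrix (Fin n) (Fin n) ℝ) (hH : H.PosSemidef)
    (y f0 : Fin n → ℝ) (t : ℝ) (ht : 0 ≤ t) :
    let C : Matrix (Fin n) (Fin n) ℝ := NormedSpace.exp (t • H) - 1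
    f0 + (1 - NormedSpace.exp (-(t • H))).mulVec (y - f0)
      = f0 + (C * (C + 1)⁻¹).mulVec (y - f0) :=
  stmt0_general H y f0 t
end

section
/- Fix α ∈ (0,1). Suppose for each n we have nonnegative reals λ_{1,n}, …, λ_{n,n} with mean λ̄_n > 0, and a sequence δ_n → 0 such that at least ⌈αn⌉ of the λ_{k,n} satisfy λ_{k,n} ≤ δ_n λ̄_n. If t_n ≥ 0 is a sequence with (n^{-1}∑_{k=1}^n exp(−t_n λ_{k,n})) / exp(−t_n λ̄_n) → 1, then t_n λ̄_n → 0. -/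
/-!
Put `x_k = t (λ̄ - λ_k)`: the normalized quantity is the mean of the `exp x_k`, and the `x_k`
have mean zero. Bounding `exp x ≥ 1 + x` everywhere and `exp x ≥ 1 + x + x² / 2` on the
at least `α n` indices with `λ_k ≤ δ λ̄`, where `x_k ≥ (1 - δ) t λ̄ ≥ 0`, the quantity is at
least `1 + α ((1 - δ) t λ̄)² / 2`. So `(t λ̄)² ≤ 8 (ratio - 1) / α` once `δ ≤ 1 / 2`, and this
tends to `0`.
-/

open Finset Filter Topology

theorem card_add_card_mul_sq_le_sum_exp {ι : Type*} [Fintype ι] (x : ι → ℝ)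
    (hx : ∑ i, x i = 0) (S : Finset ι) {m : ℝ} (hm : 0 ≤ m) (hS : ∀ i ∈ S, m ≤ x i) :
    Fintype.card ι + #S * (m ^ 2 / 2) ≤ ∑ i, Real.exp (x i) := by
  have hgap : #S * (m ^ 2 / 2) ≤ ∑ i, (Real.exp (x i) - (1 + x i)) :=
    calc #S * (m ^ 2 / 2) = ∑ _i ∈ S, m ^ 2 / 2 := by rw [sum_const, nsmul_eq_mul]
      _ ≤ ∑ i ∈ S, (Real.exp (x i) - (1 + x i)) := sum_le_sum fun i hi => by
          have hsq : m ^ 2 ≤ x i ^ 2 := pow_le_pow_left₀ hm (hS i hi) 2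
          linarith [Real.quadratic_le_exp_of_nonneg (hm.trans (hS i hi))]
      _ ≤ ∑ i, (Real.exp (x i) - (1 + x i)) := sum_le_sum_of_subset_of_nonneg (subset_univ S)
          fun i _ _ => by linarith [Real.add_one_le_exp (x i)]
  have hsplit : ∑ i, (Real.exp (x i) - (1 + x i)) = ∑ i, Real.exp (x i) - Fintype.card ι := by
    simp [sum_sub_distrib, sum_add_distrib, hx]
  linarith

theorem one_add_mul_sq_le_mean_exp_div_exp_mean {ι : Type*} [Fintype ι] [Nonempty ι]
    (lam : ι → ℝ) {L t δ α : ℝ} (hL : L = (Fintype.card ι : ℝ)⁻¹ * ∑ k, lam k) (hL0 : 0 ≤ L)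
    (ht : 0 ≤ t) (hδ : δ ≤ 1) [DecidablePred fun k => lam k ≤ δ * L]
    (hcard : α * Fintype.card ι ≤ #{k | lam k ≤ δ * L}) :
    1 + α * ((1 - δ) * (t * L)) ^ 2 / 2 ≤
      ((Fintype.card ι : ℝ)⁻¹ * ∑ k, Real.exp (-(t * lam k))) / Real.exp (-(t * L)) := by
  have hN : (0 : ℝ) < Fintype.card ι := Nat.cast_pos.mpr Fintype.card_pos
  have hsum : ∑ k, (t * L - t * lam k) = 0 := by
    rw [sum_sub_distrib, sum_const, card_univ, nsmul_eq_mul, ← mul_sum, hL]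
    field_simp
    ring
  have hsmall : ∀ k ∈ ({k | lam k ≤ δ * L} : Finset ι),
      (1 - δ) * (t * L) ≤ t * L - t * lam k := by
    intro k hk
    have := mul_le_mul_of_nonneg_left (mem_filter.mp hk).2 ht
    linarith
  have hexp := card_add_card_mul_sq_le_sum_exp _ hsum _
    (mul_nonneg (by linarith) (mul_nonneg ht hL0)) hsmall
  have hratio : ((Fintype.card ι : ℝ)⁻¹ * ∑ k, Real.exp (-(t * lam k))) / Real.exp (-(t * L))
      = (Fintype.card ι : ℝ)⁻¹ * ∑ k, Real.exp (t * L - t * lam k) := by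
    simp only [mul_div_assoc, sum_div, ← Real.exp_sub, neg_sub_neg]
  rw [hratio, le_inv_mul_iff₀ hN]
  nlinarith [sq_nonneg ((1 - δ) * (t * L))]

open Classical in
theorem stmt10_general (α : ℝ) (hα : α ∈ Set.Ioo (0:ℝ) 1)
    (lam : (n : ℕ) → Fin n → ℝ)
    (lbar : ℕ → ℝ) (hlbar : ∀ n : ℕ, lbar n = (n : ℝ)⁻¹ * ∑ k, lam n k)
    (hpos : ∀ n : ℕ, 0 < n → 0 < lbar n)
    (δ : ℕ → ℝ) (hδ : Filter.Tendsto δ Filter.atTop (nhds 0))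
    (hcard : ∀ n : ℕ, Nat.ceil (α * n) ≤
      (Finset.univ.filter fun k => lam n k ≤ δ n * lbar n).card)
    (t : ℕ → ℝ) (ht : ∀ n : ℕ, 0 ≤ t n)
    (hconv : Filter.Tendsto
      (fun n : ℕ => ((n : ℝ)⁻¹ * ∑ k, Real.exp (-(t n * lam n k))) /
        Real.exp (-(t n * lbar n))) Filter.atTop (nhds 1)) :
    Filter.Tendsto (fun n : ℕ => t n * lbar n) Filter.atTop (nhds 0) := by
  set R := fun n : ℕ => ((n : ℝ)⁻¹ * ∑ k, Real.exp (-(t n * lam n k))) /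
    Real.exp (-(t n * lbar n))
  have hbound : ∀ᶠ n in atTop, (t n * lbar n) ^ 2 ≤ 8 / α * (R n - 1) := by
    filter_upwards [hδ.eventually (eventually_le_nhds one_half_pos), eventually_ge_atTop 1]
      with n hδn hn
    have : Nonempty (Fin n) := ⟨⟨0, hn⟩⟩
    have hmean := one_add_mul_sq_le_mean_exp_div_exp_mean (lam n)
      (by simpa using hlbar n) (hpos n hn).le (ht n) (by linarith)
      ((Nat.le_ceil _).trans (by simpa using (Nat.cast_le (α := ℝ)).mpr (hcard n)))
    rw [Fintype.card_fin] at hmean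
    have hδsq : 1 / 4 ≤ (1 - δ n) ^ 2 := by nlinarith
    rw [div_mul_eq_mul_div, le_div_iff₀ hα.1]
    nlinarith [mul_nonneg (sub_nonneg.2 hδsq) (mul_nonneg hα.1.le (sq_nonneg (t n * lbar n)))]
  have hsq : Tendsto (fun n => (t n * lbar n) ^ 2) atTop (𝓝 0) := by
    refine squeeze_zero' (.of_forall fun n => sq_nonneg _) hbound ?_
    simpa using (hconv.sub_const 1).const_mul (8 / α)
  exact (tendsto_zero_iff_abs_tendsto_zero _).mpr
    (by simpa only [Real.sqrt_sq_eq_abs, Real.sqrt_zero, Function.comp_def] using hsq.sqrt)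

open Classical in
theorem stmt10 (α : ℝ) (hα : α ∈ Set.Ioo (0:ℝ) 1)
    (lam : (n : ℕ) → Fin n → ℝ) (hlam : ∀ n k, 0 ≤ lam n k)
    (lbar : ℕ → ℝ) (hlbar : ∀ n : ℕ, lbar n = (n : ℝ)⁻¹ * ∑ k, lam n k)
    (hpos : ∀ n : ℕ, 0 < n → 0 < lbar n)
    (δ : ℕ → ℝ) (hδ : Filter.Tendsto δ Filter.atTop (nhds 0))
    (hcard : ∀ n : ℕ, Nat.ceil (α * n) ≤
      (Finset.univ.filter fun k => lam n k ≤ δ n * lbar n).card)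
    (t : ℕ → ℝ) (ht : ∀ n : ℕ, 0 ≤ t n)
    (hconv : Filter.Tendsto
      (fun n : ℕ => ((n : ℝ)⁻¹ * ∑ k, Real.exp (-(t n * lam n k))) /
        Real.exp (-(t n * lbar n))) Filter.atTop (nhds 1)) :
    Filter.Tendsto (fun n : ℕ => t n * lbar n) Filter.atTop (nhds 0) :=
  stmt10_general α hα lam lbar hlbar hpos δ hδ hcard t ht hconv
end
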